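/- arXiv:2412.17706 — 7 statements merged into one kernel-verified Lean document; each statement's English description precedes it below -/
import Mathlib

section
/- Let E be a normed vector space over ℝ, s ∈ E, B ≥ 0, α > 0, λ ∈ [0,1], and M ≥ 1 a natural number. Set u₀ = (1−λ)·exp(−α). Suppose q ∈ E admits a decomposition q = (1−λ)^M · x + λ · Σ_{K=0}^{M−1} (1−λ)^K · χ_K with elements x, χ_0, …, χ_{M−1} ∈ E satisfying ‖x − s‖ ≤ B·exp(−α·M) and ‖χ_K − s‖ ≤ B·exp(−α·K) for every K < M. Then ‖q − s‖ ≤ B·( u₀^M · (1 − λ/(1−u₀)) + λ/(1−u₀) ). -/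
/-! Since `λ ∑_{K<M} (1-λ)^K = 1 - (1-λ)^M`, the state `q - s` is the same geometric mixture of
the deviations `x - s` and `χ K - s`. The triangle inequality bounds its norm by
`B (u₀^M + λ ∑_{K<M} u₀^K)`, and summing the geometric series (`u₀ < 1` as `α > 0`) gives the
closed form. -/

open Finset

theorem geom_mixture_sub {R E : Type*} [CommRing R] [AddCommGroup E] [Module R E]
    (lam : R) (M : ℕ) (x s : E) (χ : ℕ → E) :
    ((1 - lam) ^ M • x + lam • ∑ K ∈ range M, (1 - lam) ^ K • χ K) - s =
      (1 - lam) ^ M • (x - s) + lam • ∑ K ∈ range M, (1 - lam) ^ K • (χ K - s) := by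
  have hweights : lam * ∑ K ∈ range M, (1 - lam) ^ K = 1 - (1 - lam) ^ M := by
    linear_combination -geom_sum_mul (1 - lam) M
  simp only [smul_sub, sum_sub_distrib, ← sum_smul, smul_smul, hweights, sub_smul, one_smul]
  abel

theorem norm_geom_mixture_le {E : Type*} [NormedAddCommGroup E] [NormedSpace ℝ E]
    (B c lam : ℝ) (hlam0 : 0 ≤ lam) (hlam1 : lam ≤ 1) (M : ℕ) (y : E) (z : ℕ → E)
    (hy : ‖y‖ ≤ B * c ^ M) (hz : ∀ K < M, ‖z K‖ ≤ B * c ^ K) :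
    ‖(1 - lam) ^ M • y + lam • ∑ K ∈ range M, (1 - lam) ^ K • z K‖ ≤
      B * (((1 - lam) * c) ^ M + lam * ∑ K ∈ range M, ((1 - lam) * c) ^ K) := by
  have hweight (n : ℕ) : 0 ≤ (1 - lam) ^ n := pow_nonneg (by linarith) n
  have hsum : ‖∑ K ∈ range M, (1 - lam) ^ K • z K‖ ≤
      ∑ K ∈ range M, (1 - lam) ^ K * (B * c ^ K) := by
    refine (norm_sum_le _ _).trans (sum_le_sum fun K hK => ?_)
    rw [norm_smul, Real.norm_of_nonneg (hweight K)]
    exact mul_le_mul_of_nonneg_left (hz K (mem_range.mp hK)) (hweight K)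
  calc ‖(1 - lam) ^ M • y + lam • ∑ K ∈ range M, (1 - lam) ^ K • z K‖
      ≤ (1 - lam) ^ M * (B * c ^ M) + lam * ∑ K ∈ range M, (1 - lam) ^ K * (B * c ^ K) := by
        refine (norm_add_le _ _).trans (add_le_add ?_ ?_)
        · rw [norm_smul, Real.norm_of_nonneg (hweight M)]
          exact mul_le_mul_of_nonneg_left hy (hweight M)
        · rw [norm_smul, Real.norm_of_nonneg hlam0]
          exact mul_le_mul_of_nonneg_left hsum hlam0
    _ = B * (((1 - lam) * c) ^ M + lam * ∑ K ∈ range M, ((1 - lam) * c) ^ K) := by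
        simp only [mul_pow, mul_add, mul_sum]
        congr 1
        · ring
        · exact sum_congr rfl fun K _ => by ring

theorem pow_add_mul_geom_sum_eq {u : ℝ} (hu : u ≠ 1) (lam : ℝ) (M : ℕ) :
    u ^ M + lam * ∑ K ∈ range M, u ^ K = u ^ M * (1 - lam / (1 - u)) + lam / (1 - u) := by
  have h1u : 1 - u ≠ 0 := sub_ne_zero.mpr hu.symm
  rw [geom_sum_eq hu]
  field_simp
  ring

theorem stmt0_general {E : Type*} [NormedAddCommGroup E] [NormedSpace ℝ E]
    (s : E) (B α lam : ℝ) (hα : 0 < α)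
    (hlam0 : 0 ≤ lam) (hlam1 : lam ≤ 1)
    (M : ℕ) (q x : E) (χ : ℕ → E)
    (hq : q = (1 - lam) ^ M • x + lam • ∑ K ∈ Finset.range M, (1 - lam) ^ K • χ K)
    (hx : ‖x - s‖ ≤ B * Real.exp (-α * M))
    (hχ : ∀ K < M, ‖χ K - s‖ ≤ B * Real.exp (-α * K)) :
    ‖q - s‖ ≤
      B * (((1 - lam) * Real.exp (-α)) ^ M *
            (1 - lam / (1 - (1 - lam) * Real.exp (-α))) +
          lam / (1 - (1 - lam) * Real.exp (-α))) := by
  have hexp (n : ℕ) : Real.exp (-α * n) = Real.exp (-α) ^ n := by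
    rw [mul_comm, Real.exp_nat_mul]
  have hu : (1 - lam) * Real.exp (-α) ≠ 1 := by
    have : Real.exp (-α) < 1 := Real.exp_lt_one_iff.mpr (by linarith)
    nlinarith [Real.exp_pos (-α)]
  rw [← pow_add_mul_geom_sum_eq hu, hq, geom_mixture_sub]
  refine norm_geom_mixture_le B _ lam hlam0 hlam1 M _ _ (by rwa [← hexp]) fun K hK => ?_
  rw [← hexp]
  exact hχ K hK

theorem stmt0 {E : Type*} [NormedAddCommGroup E] [NormedSpace ℝ E]
    (s : E) (B α lam : ℝ) (hB : 0 ≤ B) (hα : 0 < α)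
    (hlam0 : 0 ≤ lam) (hlam1 : lam ≤ 1)
    (M : ℕ) (hM : 1 ≤ M) (q x : E) (χ : ℕ → E)
    (hq : q = (1 - lam) ^ M • x + lam • ∑ K ∈ Finset.range M, (1 - lam) ^ K • χ K)
    (hx : ‖x - s‖ ≤ B * Real.exp (-α * M))
    (hχ : ∀ K < M, ‖χ K - s‖ ≤ B * Real.exp (-α * K)) :
    ‖q - s‖ ≤
      B * (((1 - lam) * Real.exp (-α)) ^ M *
            (1 - lam / (1 - (1 - lam) * Real.exp (-α))) +
          lam / (1 - (1 - lam) * Real.exp (-α))) :=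
  stmt0_general s B α lam hα hlam0 hlam1 M q x χ hq hx hχ
end

section
/- Let E be a normed vector space over ℝ, s ∈ E, B ≥ 0, α > 0, λ ∈ [0,1], and set u₀ = (1−λ)·exp(−α). Suppose q ∈ E is such that for every natural number M ≥ 1 there exist elements x_M, χ_{M,0}, …, χ_{M,M−1} ∈ E with q = (1−λ)^M · x_M + λ · Σ_{K=0}^{M−1} (1−λ)^K · χ_{M,K}, ‖x_M − s‖ ≤ B·exp(−α·M), and ‖χ_{M,K} − s‖ ≤ B·exp(−α·K) for all K < M. Then ‖q − s‖ ≤ B·λ/(1−u₀). -/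
/-!
Since the weights `(1 - λ)^M` and `λ (1 - λ)^K`, `K < M`, sum to one, `q - s` has the same
decomposition with `x_M - s` and `χ_{M,K} - s` in place of `x_M` and `χ_{M,K}`. The triangle
inequality then gives `‖q - s‖ ≤ B u₀^M + λ B ∑_{K<M} u₀^K`, and letting `M → ∞` yields
`‖q - s‖ ≤ B λ / (1 - u₀)`.
-/

open Filter Finset Topology

theorem pow_add_mul_geom_sum_one_sub {R : Type*} [CommRing R] (a : R) (n : ℕ) :
    (1 - a) ^ n + a * ∑ k ∈ range n, (1 - a) ^ k = 1 := by
  linear_combination mul_neg_geom_sum (1 - a) n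

theorem pow_smul_add_smul_geom_sum_sub {R M : Type*} [CommRing R] [AddCommGroup M] [Module R M]
    (a : R) (n : ℕ) (x s : M) (χ : ℕ → M) :
    (1 - a) ^ n • x + a • ∑ k ∈ range n, (1 - a) ^ k • χ k - s =
      (1 - a) ^ n • (x - s) + a • ∑ k ∈ range n, (1 - a) ^ k • (χ k - s) := by
  conv_lhs => arg 2; rw [← one_smul R s, ← pow_add_mul_geom_sum_one_sub a n]
  simp only [smul_sub, sum_sub_distrib, add_smul, mul_smul, ← sum_smul]
  abel

theorem norm_pow_smul_le_of_le_exp {E : Type*} [NormedAddCommGroup E] [NormedSpace ℝ E]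
    {c B α : ℝ} (hc : 0 ≤ c) {y : E} (k : ℕ) (hy : ‖y‖ ≤ B * Real.exp (-α * k)) :
    ‖c ^ k • y‖ ≤ B * (c * Real.exp (-α)) ^ k := by
  calc ‖c ^ k • y‖ = c ^ k * ‖y‖ := by rw [norm_smul, Real.norm_of_nonneg (by positivity)]
    _ ≤ c ^ k * (B * Real.exp (-α * k)) := by gcongr
    _ = B * (c * Real.exp (-α)) ^ k := by
      rw [mul_pow, ← Real.exp_nat_mul]
      ring_nf

theorem norm_pow_smul_add_smul_geom_sum_le {E : Type*} [NormedAddCommGroup E] [NormedSpace ℝ E]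
    {a B α : ℝ} (ha0 : 0 ≤ a) (ha1 : a ≤ 1) {n : ℕ} {x : E} {χ : ℕ → E}
    (hx : ‖x‖ ≤ B * Real.exp (-α * n)) (hχ : ∀ k < n, ‖χ k‖ ≤ B * Real.exp (-α * k)) :
    ‖(1 - a) ^ n • x + a • ∑ k ∈ range n, (1 - a) ^ k • χ k‖ ≤
      B * ((1 - a) * Real.exp (-α)) ^ n +
        a * ∑ k ∈ range n, B * ((1 - a) * Real.exp (-α)) ^ k := by
  have hc : 0 ≤ 1 - a := by linarith
  have hsum : ‖∑ k ∈ range n, (1 - a) ^ k • χ k‖ ≤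
      ∑ k ∈ range n, B * ((1 - a) * Real.exp (-α)) ^ k :=
    (norm_sum_le _ _).trans <| sum_le_sum fun k hk ↦
      norm_pow_smul_le_of_le_exp hc k (hχ k (mem_range.mp hk))
  calc _ ≤ ‖(1 - a) ^ n • x‖ + ‖a • ∑ k ∈ range n, (1 - a) ^ k • χ k‖ := norm_add_le _ _
    _ = ‖(1 - a) ^ n • x‖ + a * ‖∑ k ∈ range n, (1 - a) ^ k • χ k‖ := by
        rw [norm_smul a, Real.norm_of_nonneg ha0]
    _ ≤ _ := by gcongr; exact norm_pow_smul_le_of_le_exp hc n hx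

theorem tendsto_mul_pow_add_mul_geom_sum {u : ℝ} (hu : |u| < 1) (B a : ℝ) :
    Tendsto (fun n : ℕ ↦ B * u ^ n + a * ∑ k ∈ range n, B * u ^ k) atTop
      (𝓝 (B * a / (1 - u))) := by
  have hpow := (tendsto_pow_atTop_nhds_zero_of_abs_lt_one hu).const_mul B
  have hgeom := ((hasSum_geometric_of_abs_lt_one hu).mul_left B).tendsto_sum_nat.const_mul a
  convert hpow.add hgeom using 2
  field_simp
  ring

theorem stmt1_general {E : Type*} [NormedAddCommGroup E] [NormedSpace ℝ E]
    (s : E) (B α lam : ℝ) (hα : 0 < α)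
    (hlam0 : 0 ≤ lam) (hlam1 : lam ≤ 1) (q : E)
    (h : ∀ M : ℕ, 1 ≤ M → ∃ (x : E) (χ : ℕ → E),
        q = (1 - lam) ^ M • x + lam • ∑ K ∈ Finset.range M, (1 - lam) ^ K • χ K ∧
        ‖x - s‖ ≤ B * Real.exp (-α * M) ∧
        ∀ K < M, ‖χ K - s‖ ≤ B * Real.exp (-α * K)) :
    ‖q - s‖ ≤ B * lam / (1 - (1 - lam) * Real.exp (-α)) := by
  have hu : |(1 - lam) * Real.exp (-α)| < 1 := by
    rw [abs_of_nonneg (by have := hlam1; positivity)]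
    calc (1 - lam) * Real.exp (-α) ≤ 1 * Real.exp (-α) := by gcongr; linarith
      _ < 1 := by rw [one_mul, Real.exp_lt_one_iff]; linarith
  refine ge_of_tendsto (tendsto_mul_pow_add_mul_geom_sum hu B lam) ?_
  filter_upwards [eventually_ge_atTop 1] with M hM
  obtain ⟨x, χ, rfl, hx, hχ⟩ := h M hM
  rw [pow_smul_add_smul_geom_sum_sub]
  exact norm_pow_smul_add_smul_geom_sum_le hlam0 hlam1 hx hχ

theorem stmt1 {E : Type*} [NormedAddCommGroup E] [NormedSpace ℝ E]
    (s : E) (B α lam : ℝ) (hB : 0 ≤ B) (hα : 0 < α)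
    (hlam0 : 0 ≤ lam) (hlam1 : lam ≤ 1) (q : E)
    (h : ∀ M : ℕ, 1 ≤ M → ∃ (x : E) (χ : ℕ → E),
        q = (1 - lam) ^ M • x + lam • ∑ K ∈ Finset.range M, (1 - lam) ^ K • χ K ∧
        ‖x - s‖ ≤ B * Real.exp (-α * M) ∧
        ∀ K < M, ‖χ K - s‖ ≤ B * Real.exp (-α * K)) :
    ‖q - s‖ ≤ B * lam / (1 - (1 - lam) * Real.exp (-α)) :=
  stmt1_general s B α lam hα hlam0 hlam1 q h
end

section
/- Let E be a normed vector space over ℂ, let A, Ã : E →L E be continuous linear maps with operator norms ‖A‖ ≤ 1 and ‖Ã‖ ≤ 1, let q ∈ E satisfy Ã(q) = q and ‖q‖ ≤ 1, let p ∈ E, let M be a natural number, and let ε ≥ 0 satisfy ‖A^M(q) − p‖ ≤ ε. Then ‖q − p‖ ≤ M · ‖Ã − A‖ + ε. -/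
/-! Since `A' q = q`, the defect of one noiseless step at `q` is `q - A q = (A' - A) q`, and
`q - A ^ M q` telescopes into the sum of `A ^ k (A' - A) q` over `k < M`. A contraction `A`
does not enlarge any of these `M` terms, so `‖q - A ^ M q‖ ≤ M ‖A' - A‖ ‖q‖`; the triangle
inequality through `A ^ M q` finishes. -/

namespace ContinuousLinearMap

variable {𝕜 E : Type*} [NontriviallyNormedField 𝕜] [SeminormedAddCommGroup E]
  [NormedSpace 𝕜 E]

theorem norm_pow_apply_le_of_norm_le_one {A : E →L[𝕜] E} (hA : ‖A‖ ≤ 1) (x : E) (n : ℕ) :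
    ‖(A ^ n) x‖ ≤ ‖x‖ := by
  induction n with
  | zero => simp
  | succ n ih =>
    rw [pow_succ', mul_apply_eq_comp]
    exact (A.le_opNorm _).trans ((mul_le_of_le_one_left (norm_nonneg _) hA).trans ih)

theorem norm_sub_pow_apply_le_of_apply_eq_self {A B : E →L[𝕜] E} (hA : ‖A‖ ≤ 1) {q : E}
    (hq : B q = q) (n : ℕ) : ‖q - (A ^ n) q‖ ≤ n * (‖B - A‖ * ‖q‖) := by
  induction n with
  | zero => simp
  | succ n ih =>
    have telescope : q - (A ^ (n + 1)) q = (q - (A ^ n) q) + (A ^ n) ((B - A) q) := by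
      rw [pow_succ, mul_apply_eq_comp, sub_apply, hq, map_sub]
      abel
    calc ‖q - (A ^ (n + 1)) q‖
        ≤ ‖q - (A ^ n) q‖ + ‖(A ^ n) ((B - A) q)‖ := telescope ▸ norm_add_le _ _
      _ ≤ n * (‖B - A‖ * ‖q‖) + ‖B - A‖ * ‖q‖ :=
          add_le_add ih ((norm_pow_apply_le_of_norm_le_one hA _ n).trans ((B - A).le_opNorm q))
      _ = (n + 1 : ℕ) * (‖B - A‖ * ‖q‖) := by push_cast; ring

end ContinuousLinearMap

theorem stmt3_general {E : Type*} [NormedAddCommGroup E] [NormedSpace ℂ E]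
    (A A' : E →L[ℂ] E) (hA : ‖A‖ ≤ 1)
    (q p : E) (hq : A' q = q) (hqn : ‖q‖ ≤ 1) (M : ℕ) (ε : ℝ)
    (h : ‖(A ^ M) q - p‖ ≤ ε) :
    ‖q - p‖ ≤ M * ‖A' - A‖ + ε := by
  have drift : ‖q - (A ^ M) q‖ ≤ M * ‖A' - A‖ := by
    calc ‖q - (A ^ M) q‖ ≤ M * (‖A' - A‖ * ‖q‖) :=
          A.norm_sub_pow_apply_le_of_apply_eq_self hA hq M
      _ ≤ M * ‖A' - A‖ := by gcongr; exact mul_le_of_le_one_right (norm_nonneg _) hqn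
  linarith [norm_sub_le_norm_sub_add_norm_sub q ((A ^ M) q) p]

theorem stmt3 {E : Type*} [NormedAddCommGroup E] [NormedSpace ℂ E]
    (A A' : E →L[ℂ] E) (hA : ‖A‖ ≤ 1) (hA' : ‖A'‖ ≤ 1)
    (q p : E) (hq : A' q = q) (hqn : ‖q‖ ≤ 1) (M : ℕ) (ε : ℝ) (hε : 0 ≤ ε)
    (h : ‖(A ^ M) q - p‖ ≤ ε) :
    ‖q - p‖ ≤ M * ‖A' - A‖ + ε :=
  stmt3_general A A' hA q p hq hqn M ε h
end

section
/- Let 𝓗 be a complex Hilbert space, let A : 𝓗 →L 𝓗 be a continuous linear map, let β > 0, Δt > 0, let S ≥ 1 be a natural number, and for each integer s let U_s be a unitary operator on 𝓗. Define g(t) = π^{−3/4} β^{−1/2} · exp(i·t/β) · exp(−2t²/β²) for t ∈ ℝ. Then the family ( Δt · g(s·Δt) · U_s ∘ A ∘ U_s^* ) indexed by integers s with |s| > S is absolutely summable, and ‖ Σ_{|s|>S} Δt · g(s·Δt) · U_s ∘ A ∘ U_s^* ‖ ≤ (2Δt/(π^{3/4} β^{1/2})) · exp(−2(S·Δt/β)²)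 / (1 − exp(−2S(Δt/β)²)) · ‖A‖, where ‖·‖ is the operator norm. -/
/-- The Gaussian filter function `g(t) = π^{-3/4} β^{-1/2} e^{i t/β} e^{-2t²/β²}`. -/
noncomputable def gFilter (β t : ℝ) : ℂ :=
  ((Real.pi ^ (-(3 / 4 : ℝ)) * β ^ (-(1 / 2 : ℝ)) : ℝ) : ℂ) *
    Complex.exp (Complex.I * t / β) * Complex.exp (-2 * t ^ 2 / β ^ 2)

/-! Conjugation by a unitary is isometric in a C*-algebra, so the `s`-th term has norm
`Δt ‖g(sΔt)‖ ‖A‖`. Writing `|s| = S + 1 + k`, the inequality `s² ≥ S² + S k` bounds the Gaussian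
factor by `e^{-2(SΔt/β)²} rᵏ` with `r = e^{-2S(Δt/β)²} < 1`, and the two geometric tails
`s > S` and `s < -S` each sum to `1 / (1 - r)`. -/

open Real

theorem norm_gFilter {β : ℝ} (hβ : 0 ≤ β) (t : ℝ) :
    ‖gFilter β t‖ = exp (-2 * (t / β) ^ 2) / (π ^ ((3 : ℝ) / 4) * β ^ ((1 : ℝ) / 2)) := by
  have hphase : ‖Complex.exp (Complex.I * t / β)‖ = 1 := by
    rw [Complex.norm_exp]; simp [Complex.div_re]
  have hgauss : Complex.exp (-2 * t ^ 2 / β ^ 2) = ((exp (-2 * (t / β) ^ 2) : ℝ) : ℂ) := by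
    rw [Complex.ofReal_exp]; push_cast; ring_nf
  rw [gFilter, norm_mul, norm_mul, hphase, hgauss, Complex.norm_real, Complex.norm_real,
    Real.norm_of_nonneg (by positivity), Real.norm_of_nonneg (by positivity),
    rpow_neg pi_pos.le, rpow_neg hβ]
  ring

theorem CStarRing.norm_mul_mul_star_of_mem_unitary {E : Type*} [NormedRing E] [StarRing E]
    [CStarRing E] {U : E} (hU : U ∈ unitary E) (A : E) : ‖U * A * star U‖ = ‖A‖ := by
  rw [CStarRing.norm_mul_mem_unitary _ (Unitary.star_mem hU), CStarRing.norm_mem_unitary_mul _ hU]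

theorem exp_neg_two_mul_sq_le_of_lt_abs {S : ℕ} {s : ℤ} (hs : (S : ℤ) < |s|) (x : ℝ) :
    exp (-2 * (s * x) ^ 2) ≤
      exp (-2 * (S * x) ^ 2) * exp (-2 * S * x ^ 2) ^ (s.natAbs - (S + 1)) := by
  rw [Int.abs_eq_natAbs] at hs
  obtain ⟨k, hk⟩ : ∃ k, s.natAbs = S + 1 + k := ⟨s.natAbs - (S + 1), by omega⟩
  have hsq : (s : ℝ) ^ 2 = ((S + 1 + k : ℕ) : ℝ) ^ 2 := by
    rw [← hk, Nat.cast_natAbs, Int.cast_abs, sq_abs]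
  rw [← exp_nat_mul, ← exp_add, exp_le_exp, mul_pow, hsq, hk, Nat.add_sub_cancel_left]
  push_cast
  nlinarith [mul_nonneg (sq_nonneg x) (by positivity : (0 : ℝ) ≤ 1 + k ^ 2 + 2 * S + S * k + 2 * k)]

def Int.sumEquivAbsGt (S : ℕ) : ℕ ⊕ ℕ ≃ {s : ℤ // (S : ℤ) < |s|} where
  toFun := Sum.elim (fun k ↦ ⟨S + 1 + k, by rw [abs_of_nonneg (by positivity)]; omega⟩)
    (fun k ↦ ⟨-(S + 1 + k), by rw [abs_neg, abs_of_nonneg (by positivity)]; omega⟩)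
  invFun s := if 0 < (s : ℤ) then Sum.inl (s.1.natAbs - (S + 1)) else Sum.inr (s.1.natAbs - (S + 1))
  left_inv := by
    rintro (k | k) <;> dsimp only [Sum.elim_inl, Sum.elim_inr] <;> split_ifs <;>
      (try simp only [Sum.inl.injEq, Sum.inr.injEq]) <;> omega
  right_inv := by
    rintro ⟨s, hs⟩
    rw [Int.abs_eq_natAbs] at hs
    dsimp only
    split_ifs <;> simp only [Sum.elim_inl, Sum.elim_inr, Subtype.mk.injEq] <;> omega

theorem HasSum.natAbs_sub_of_lt_abs {M : Type*} [AddCommMonoid M] [TopologicalSpace M]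
    [ContinuousAdd M] {g : ℕ → M} {a : M} (hg : HasSum g a) (S : ℕ) :
    HasSum (fun s : {s : ℤ // (S : ℤ) < |s|} ↦ g ((s : ℤ).natAbs - (S + 1))) (a + a) := by
  rw [← (Int.sumEquivAbsGt S).hasSum_iff]
  refine HasSum.sum ?_ ?_ <;> convert hg using 1 <;> ext k <;>
    simp only [Int.sumEquivAbsGt, Equiv.coe_fn_mk, Function.comp_apply, Sum.elim_inl,
      Sum.elim_inr] <;> congr 1 <;> omega

theorem norm_smul_gFilter_conj_le {H : Type*} [NormedAddCommGroup H] [InnerProductSpace ℂ H]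
    [CompleteSpace H] (A : H →L[ℂ] H) {β Δt : ℝ} (hβ : 0 ≤ β) (hΔt : 0 ≤ Δt)
    {V : H →L[ℂ] H} (hV : V ∈ unitary (H →L[ℂ] H)) {S : ℕ} {s : ℤ} (hs : (S : ℤ) < |s|) :
    ‖((Δt : ℂ) * gFilter β (s * Δt)) • (V ∘L A ∘L star V)‖ ≤
      Δt / (π ^ ((3 : ℝ) / 4) * β ^ ((1 : ℝ) / 2)) * exp (-2 * ((S : ℝ) * Δt / β) ^ 2) * ‖A‖ *
        exp (-2 * (S : ℝ) * (Δt / β) ^ 2) ^ (s.natAbs - (S + 1)) := by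
  have hconj : ‖V ∘L A ∘L star V‖ = ‖A‖ := CStarRing.norm_mul_mul_star_of_mem_unitary hV A
  rw [norm_smul, norm_mul, hconj, Complex.norm_real, norm_of_nonneg hΔt, norm_gFilter hβ,
    mul_div_assoc]
  have hgauss := exp_neg_two_mul_sq_le_of_lt_abs hs (Δt / β)
  calc _ = Δt / (π ^ ((3 : ℝ) / 4) * β ^ ((1 : ℝ) / 2)) * ‖A‖ *
        exp (-2 * (s * (Δt / β)) ^ 2) := by ring
    _ ≤ Δt / (π ^ ((3 : ℝ) / 4) * β ^ ((1 : ℝ) / 2)) * ‖A‖ *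
        (exp (-2 * (S * (Δt / β)) ^ 2) *
          exp (-2 * (S : ℝ) * (Δt / β) ^ 2) ^ (s.natAbs - (S + 1))) := by gcongr
    _ = _ := by rw [mul_div_assoc]; ring

theorem stmt8 {H : Type*} [NormedAddCommGroup H] [InnerProductSpace ℂ H] [CompleteSpace H]
    (A : H →L[ℂ] H) (β Δt : ℝ) (hβ : 0 < β) (hΔt : 0 < Δt) (S : ℕ) (hS : 1 ≤ S)
    (U : ℤ → H →L[ℂ] H) (hU : ∀ s, U s ∈ unitary (H →L[ℂ] H)) :
    Summable (fun s : {s : ℤ // (S : ℤ) < |s|} =>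
        ‖((Δt : ℂ) * gFilter β ((s : ℤ) * Δt)) • (U (s : ℤ) ∘L A ∘L star (U (s : ℤ)))‖) ∧
      ‖∑' s : {s : ℤ // (S : ℤ) < |s|},
          ((Δt : ℂ) * gFilter β ((s : ℤ) * Δt)) • (U (s : ℤ) ∘L A ∘L star (U (s : ℤ)))‖ ≤
        2 * Δt / (Real.pi ^ ((3 : ℝ) / 4) * β ^ ((1 : ℝ) / 2)) *
          (Real.exp (-2 * ((S : ℝ) * Δt / β) ^ 2) /
            (1 - Real.exp (-2 * (S : ℝ) * (Δt / β) ^ 2))) * ‖A‖ := by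
  set r := exp (-2 * (S : ℝ) * (Δt / β) ^ 2)
  have hr : r < 1 := by
    rw [exp_lt_one_iff]
    have : 0 < (S : ℝ) * (Δt / β) ^ 2 := mul_pos (Nat.cast_pos.mpr hS) (by positivity)
    linarith
  set K := Δt / (π ^ ((3 : ℝ) / 4) * β ^ ((1 : ℝ) / 2)) * exp (-2 * ((S : ℝ) * Δt / β) ^ 2) * ‖A‖
  have hsum := ((hasSum_geometric_of_lt_one (exp_nonneg _) hr).mul_left K).natAbs_sub_of_lt_abs S
  have hbound : ∀ s : {s : ℤ // (S : ℤ) < |s|},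
      ‖((Δt : ℂ) * gFilter β ((s : ℤ) * Δt)) • (U (s : ℤ) ∘L A ∘L star (U (s : ℤ)))‖ ≤
        K * r ^ ((s : ℤ).natAbs - (S + 1)) :=
    fun s ↦ norm_smul_gFilter_conj_le A hβ.le hΔt.le (hU s) s.2
  refine ⟨hsum.summable.of_nonneg_of_le (fun _ ↦ norm_nonneg _) hbound, ?_⟩
  calc _ ≤ K * (1 - r)⁻¹ + K * (1 - r)⁻¹ := tsum_of_norm_bounded hsum hbound
    _ = _ := by simp only [K]; ring
end

section
/- Let β > 0, Δt > 0, and ν ∈ ℝ. Define g(t) = π^{−3/4} β^{−1/2} · exp(i·t/β) · exp(−2t²/β²) for t ∈ ℝ and η(μ) = (β²/(4π))^{1/4} · exp(−(β·μ + 1)²/8) for μ ∈ ℝ. Then both series below converge absolutely and Δt · Σ_{s∈ℤ} g(s·Δt) · exp(i·ν·s·Δt) = Σ_{k∈ℤ} η(ν − 2πk/Δt). -/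
/-- The frequency-domain filter `η(μ) = (β²/(4π))^{1/4} e^{-(βμ+1)²/8}`. -/
noncomputable def etaFilter (β μ : ℝ) : ℝ :=
  (β ^ 2 / (4 * Real.pi)) ^ ((1 : ℝ) / 4) * Real.exp (-(β * μ + 1) ^ 2 / 8)

open Real Complex

lemma summable_cexp_neg_quadratic_I_mul {a : ℝ} (ha : 0 < a) (r : ℝ) :
    Summable fun n : ℤ => cexp (-π * a * n ^ 2 + 2 * π * I * r * n) := by
  refine ((summable_jacobiTheta₂_term_iff r (I * a)).mpr (by simpa using ha)).congr fun n => ?_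
  rw [jacobiTheta₂_term]
  congr 1
  ring_nf
  rw [I_sq]
  ring

lemma summable_exp_neg_div_mul_sub_sq {a : ℝ} (ha : 0 < a) (r : ℝ) :
    Summable fun n : ℤ => rexp (-π / a * (n - r) ^ 2) := by
  refine (HurwitzKernelBounds.summable_f_int 0 (-r) (one_div_pos.mpr ha)).congr fun n => ?_
  rw [HurwitzKernelBounds.f_int, pow_zero, one_mul]
  congr 1
  ring

theorem tsum_cexp_neg_quadratic_I_mul {a : ℝ} (ha : 0 < a) (r : ℝ) :
    ∑' n : ℤ, cexp (-π * a * n ^ 2 + 2 * π * I * r * n) =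
      ((a ^ (-(1 / 2 : ℝ)) * ∑' n : ℤ, rexp (-π / a * (n - r) ^ 2) : ℝ) : ℂ) := by
  have h := Complex.tsum_exp_neg_quadratic (a := (a : ℂ)) (by simpa using ha) (I * r)
  simp only [← mul_assoc, I_mul_I] at h
  rw [h, ofReal_mul, ofReal_tsum, Real.rpow_neg ha.le, ofReal_inv, ofReal_cpow ha.le, one_div]
  push_cast
  congr 2
  funext n
  congr 1
  ring

lemma gFilter_mul_cexp {β : ℝ} (hβ : β ≠ 0) (Δt ν : ℝ) (s : ℤ) :
    gFilter β (s * Δt) * cexp (I * ν * ((s : ℝ) * Δt)) =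
      ((π ^ (-(3 / 4 : ℝ)) * β ^ (-(1 / 2 : ℝ)) : ℝ) : ℂ) *
        cexp (-π * (2 * Δt ^ 2 / (π * β ^ 2) : ℝ) * s ^ 2 +
          2 * π * I * (Δt * (β * ν + 1) / (2 * π * β) : ℝ) * s) := by
  rw [gFilter, mul_assoc, mul_assoc, ← Complex.exp_add, ← Complex.exp_add]
  have hπ : (π : ℂ) ≠ 0 := ofReal_ne_zero.mpr pi_ne_zero
  have hβ' : (β : ℂ) ≠ 0 := ofReal_ne_zero.mpr hβ
  congr 2
  push_cast
  field_simp
  ring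

lemma etaFilter_sub_two_pi_mul_div {β Δt : ℝ} (hβ : β ≠ 0) (hΔt : Δt ≠ 0) (ν : ℝ) (k : ℤ) :
    etaFilter β (ν - 2 * π * k / Δt) =
      (β ^ 2 / (4 * π)) ^ ((1 : ℝ) / 4) *
        rexp (-π / (2 * Δt ^ 2 / (π * β ^ 2)) * (k - Δt * (β * ν + 1) / (2 * π * β)) ^ 2) := by
  have hπ := pi_ne_zero
  rw [etaFilter]
  congr 2
  field_simp
  ring

lemma gFilter_etaFilter_normalization {β Δt : ℝ} (hβ : 0 < β) (hΔt : 0 < Δt) :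
    Δt * (π ^ (-(3 / 4 : ℝ)) * β ^ (-(1 / 2 : ℝ))) * (2 * Δt ^ 2 / (π * β ^ 2)) ^ (-(1 / 2 : ℝ)) =
      (β ^ 2 / (4 * π)) ^ ((1 : ℝ) / 4) := by
  have hπ := pi_pos
  refine (pow_left_inj₀ (by positivity) (by positivity) four_ne_zero).mp ?_
  rw [mul_pow, mul_pow, mul_pow, ← Nat.cast_ofNat, ← rpow_mul_natCast hπ.le,
    ← rpow_mul_natCast hβ.le, ← rpow_mul_natCast (by positivity),
    ← rpow_mul_natCast (by positivity)]
  norm_num [Real.rpow_neg, Real.rpow_natCast]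
  field_simp
  ring

theorem stmt11 (β Δt ν : ℝ) (hβ : 0 < β) (hΔt : 0 < Δt) :
    Summable (fun s : ℤ => ‖gFilter β ((s : ℝ) * Δt) *
        Complex.exp (Complex.I * ν * ((s : ℝ) * Δt))‖) ∧
      Summable (fun k : ℤ => ‖etaFilter β (ν - 2 * Real.pi * (k : ℝ) / Δt)‖) ∧
      (Δt : ℂ) * ∑' s : ℤ, gFilter β ((s : ℝ) * Δt) *
          Complex.exp (Complex.I * ν * ((s : ℝ) * Δt)) =
        ((∑' k : ℤ, etaFilter β (ν - 2 * Real.pi * (k : ℝ) / Δt) : ℝ) : ℂ) := by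
  have ha : 0 < 2 * Δt ^ 2 / (π * β ^ 2) := by positivity
  have hg := gFilter_mul_cexp hβ.ne' Δt ν
  have hη := etaFilter_sub_two_pi_mul_div hβ.ne' hΔt.ne' ν
  refine ⟨?_, ?_, ?_⟩
  · simp_rw [hg]
    exact summable_norm_iff.mpr ((summable_cexp_neg_quadratic_I_mul ha _).mul_left _)
  · simp_rw [hη]
    exact summable_norm_iff.mpr ((summable_exp_neg_div_mul_sub_sq ha _).mul_left _)
  · rw [tsum_congr hg, tsum_mul_left, tsum_cexp_neg_quadratic_I_mul ha, tsum_congr hη,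
      tsum_mul_left, ← gFilter_etaFilter_normalization hβ hΔt]
    push_cast
    ring
end

section
/- Let N be a positive natural number, let H be a Hermitian N×N complex matrix, let β ∈ ℝ, and let B be a finite subset of ℝ closed under negation (ν ∈ B implies −ν ∈ B). Let η : ℝ → ℝ satisfy η(ν) = exp(−βν/2)·η(−ν) for every ν ∈ B, and let A : ℝ → (N×N complex matrices) satisfy, for every ν ∈ B, the commutation relation H·A(ν) − A(ν)·H = ν·A(ν) and the Hermiticity relation (A(ν))ᴴ = A(−ν). Define L = Σ_{ν∈B} η(ν)·A(ν). Then exp((β/2)·H) · L · exp(−(β/2)·H) = Lᴴ. -/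
open Matrix NormedSpace

/-!
Each `A ν` is an eigenvector of `ad H` with eigenvalue `ν`, so conjugation by `exp ((β/2) H)`
multiplies it by `exp (β ν / 2)`. The filter condition turns `η ν * exp (β ν / 2)` into `η (-ν)`,
and reindexing the sum by `ν ↦ -ν` together with `(A ν)ᴴ = A (-ν)` yields `Lᴴ`.
-/

theorem NormedSpace.exp_mul_mul_exp_neg_of_mul_sub_mul_eq_smul {𝕂 𝔸 : Type*} [RCLike 𝕂]
    [NormedRing 𝔸] [NormedAlgebra 𝕂 𝔸] [CompleteSpace 𝔸] {x a : 𝔸} {μ : 𝕂}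
    (h : x * a - a * x = μ • a) :
    exp x * a * exp (-x) = exp μ • a := by
  let +nondep : NormedAlgebra ℚ 𝔸 := .restrictScalars ℚ 𝕂 𝔸
  have hsemi : SemiconjBy a (x + algebraMap 𝕂 𝔸 μ) x := by
    rw [SemiconjBy, mul_add, ← Algebra.commutes, ← Algebra.smul_def, ← h, add_sub_cancel]
  have hshift : exp x * a = exp μ • (a * exp x) := by
    rw [← hsemi.exp_right, exp_add_of_commute (Algebra.commutes μ x).symm, ← algebraMap_exp_comm,
      ← Algebra.commutes, ← Algebra.smul_def, mul_smul_comm]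
  rw [hshift, smul_mul_assoc, mul_assoc, ← exp_add_of_commute (Commute.neg_right rfl),
    add_neg_cancel, exp_zero, mul_one]

theorem Matrix.exp_smul_mul_mul_exp_neg_smul_of_mul_sub_mul_eq_smul {n : Type*} [Fintype n]
    [DecidableEq n] {H A : Matrix n n ℂ} {ν : ℂ} (h : H * A - A * H = ν • A) (c : ℂ) :
    exp (c • H) * A * exp ((-c) • H) = Complex.exp (c * ν) • A := by
  let := Matrix.linftyOpNormedRing (n := n) (α := ℂ)
  let := Matrix.linftyOpNormedAlgebra (n := n) (R := ℂ) (α := ℂ)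
  rw [neg_smul, Complex.exp_eq_exp_ℂ]
  refine exp_mul_mul_exp_neg_of_mul_sub_mul_eq_smul ?_
  rw [smul_mul_assoc, mul_smul_comm, ← smul_sub, h, smul_smul]

theorem stmt14_general (N : ℕ) (H : Matrix (Fin N) (Fin N) ℂ)
    (β : ℝ) (B : Finset ℝ) (hBneg : ∀ ν ∈ B, -ν ∈ B)
    (η : ℝ → ℝ) (hη : ∀ ν ∈ B, η ν = Real.exp (-β * ν / 2) * η (-ν))
    (A : ℝ → Matrix (Fin N) (Fin N) ℂ)
    (hcomm : ∀ ν ∈ B, H * A ν - A ν * H = (ν : ℂ) • A ν)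
    (hherm : ∀ ν ∈ B, (A ν)ᴴ = A (-ν)) :
    NormedSpace.exp (((β / 2 : ℝ) : ℂ) • H) * (∑ ν ∈ B, (η ν : ℂ) • A ν) *
        NormedSpace.exp ((-(β / 2 : ℝ) : ℂ) • H) =
      (∑ ν ∈ B, (η ν : ℂ) • A ν)ᴴ := by
  have hterm : ∀ ν ∈ B, exp (((β / 2 : ℝ) : ℂ) • H) * ((η ν : ℂ) • A ν) *
      exp ((-(β / 2 : ℝ) : ℂ) • H) = (η (-ν) : ℂ) • A ν := by
    intro ν hν
    have hfilter : η (-ν) = Real.exp (β / 2 * ν) * η ν := by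
      rw [hη (-ν) (hBneg ν hν), neg_neg]; ring_nf
    rw [mul_smul_comm, smul_mul_assoc,
      exp_smul_mul_mul_exp_neg_smul_of_mul_sub_mul_eq_smul (hcomm ν hν), smul_smul, hfilter]
    congr 1
    push_cast
    ring
  have hneg : ∀ ν, ν ∈ B ↔ -ν ∈ B := fun ν => ⟨hBneg ν, fun h => neg_neg ν ▸ hBneg (-ν) h⟩
  rw [Finset.mul_sum, Finset.sum_mul, Finset.sum_congr rfl hterm, conjTranspose_sum]
  refine Finset.sum_equiv (Equiv.neg ℝ) hneg fun ν hν => ?_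
  rw [Equiv.neg_apply, conjTranspose_smul, hherm (-ν) ((hneg ν).mp hν), Complex.star_def,
    Complex.conj_ofReal, neg_neg]

theorem stmt14 (N : ℕ) (hN : 0 < N) (H : Matrix (Fin N) (Fin N) ℂ) (hH : H.IsHermitian)
    (β : ℝ) (B : Finset ℝ) (hBneg : ∀ ν ∈ B, -ν ∈ B)
    (η : ℝ → ℝ) (hη : ∀ ν ∈ B, η ν = Real.exp (-β * ν / 2) * η (-ν))
    (A : ℝ → Matrix (Fin N) (Fin N) ℂ)
    (hcomm : ∀ ν ∈ B, H * A ν - A ν * H = (ν : ℂ) • A ν)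
    (hherm : ∀ ν ∈ B, (A ν)ᴴ = A (-ν)) :
    NormedSpace.exp (((β / 2 : ℝ) : ℂ) • H) * (∑ ν ∈ B, (η ν : ℂ) • A ν) *
        NormedSpace.exp ((-(β / 2 : ℝ) : ℂ) • H) =
      (∑ ν ∈ B, (η ν : ℂ) • A ν)ᴴ :=
  stmt14_general N H β B hBneg η hη A hcomm hherm
end

section
/- Let N be a positive natural number, let H be a Hermitian N×N complex matrix, let β ∈ ℝ, and write σhalf = exp(−(β/2)·H) (matrix exponential). Let L be an N×N complex matrix satisfying exp((β/2)·H) · L · exp(−(β/2)·H) = Lᴴ. Then for all N×N complex matrices X and Y, Tr( Xᴴ · σhalf · (Lᴴ · Y · L) · σhalf ) = Tr( (Lᴴ · X · L)ᴴ · σhalf · Y · σhalf ). -/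
/-!
Write `S = e^{-βH/2}`. Since `e^{βH/2}` inverts `S`, the intertwining relation is equivalent to
`L S = S Lᴴ`. Moving `L` across `S` on the left-hand side and `Lᴴ` across `S` on the right-hand
side turns both traces into `Tr(Xᴴ S Lᴴ Y S Lᴴ)`, up to a cyclic permutation.
-/

open Matrix

section DetailedBalance

variable {n R : Type*} [Fintype n] [CommSemiring R] [StarRing R]

theorem trace_conjTranspose_mul_transition_eq {S L : Matrix n n R} (hLS : L * S = S * Lᴴ)
    (X Y : Matrix n n R) :
    (Xᴴ * S * (Lᴴ * Y * L) * S).trace = ((Lᴴ * X * L)ᴴ * S * Y * S).trace := calc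
  (Xᴴ * S * (Lᴴ * Y * L) * S).trace = (Xᴴ * S * Lᴴ * Y * (L * S)).trace := by
    simp only [Matrix.mul_assoc]
  _ = (Lᴴ * (Xᴴ * S * Lᴴ * Y * S)).trace := by
    rw [hLS, trace_mul_comm Lᴴ]; simp only [Matrix.mul_assoc]
  _ = ((Lᴴ * X * L)ᴴ * S * Y * S).trace := by
    simp only [conjTranspose_mul, conjTranspose_conjTranspose, ← hLS, Matrix.mul_assoc]

end DetailedBalance

section Exponential

variable {n 𝔸 : Type*} [Fintype n] [DecidableEq n]
  [NormedCommRing 𝔸] [NormedAlgebra ℚ 𝔸] [CompleteSpace 𝔸]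

theorem Matrix.exp_neg_mul_exp (A : Matrix n n 𝔸) :
    NormedSpace.exp (-A) * NormedSpace.exp A = 1 := by
  rw [exp_neg, nonsing_inv_mul _ ((isUnit_iff_isUnit_det _).mp (isUnit_exp A))]

theorem Matrix.mul_exp_neg_eq_of_exp_conj_eq [StarRing 𝔸] {A L : Matrix n n 𝔸}
    (hL : NormedSpace.exp A * L * NormedSpace.exp (-A) = Lᴴ) :
    L * NormedSpace.exp (-A) = NormedSpace.exp (-A) * Lᴴ := by
  rw [← hL, ← Matrix.mul_assoc, ← Matrix.mul_assoc, exp_neg_mul_exp, Matrix.one_mul]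

end Exponential

theorem stmt15_general (N : ℕ) (H : Matrix (Fin N) (Fin N) ℂ)
    (β : ℝ) (L : Matrix (Fin N) (Fin N) ℂ)
    (hL : NormedSpace.exp (((β / 2 : ℝ) : ℂ) • H) * L *
        NormedSpace.exp ((-(β / 2 : ℝ) : ℂ) • H) = Lᴴ) :
    ∀ X Y : Matrix (Fin N) (Fin N) ℂ,
      (Xᴴ * NormedSpace.exp ((-(β / 2 : ℝ) : ℂ) • H) * (Lᴴ * Y * L) *
          NormedSpace.exp ((-(β / 2 : ℝ) : ℂ) • H)).trace =
        ((Lᴴ * X * L)ᴴ * NormedSpace.exp ((-(β / 2 : ℝ) : ℂ) • H) * Y *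
          NormedSpace.exp ((-(β / 2 : ℝ) : ℂ) • H)).trace := by
  rw [neg_smul] at hL ⊢
  exact trace_conjTranspose_mul_transition_eq (mul_exp_neg_eq_of_exp_conj_eq hL)

theorem stmt15 (N : ℕ) (hN : 0 < N) (H : Matrix (Fin N) (Fin N) ℂ) (hH : H.IsHermitian)
    (β : ℝ) (L : Matrix (Fin N) (Fin N) ℂ)
    (hL : NormedSpace.exp (((β / 2 : ℝ) : ℂ) • H) * L *
        NormedSpace.exp ((-(β / 2 : ℝ) : ℂ) • H) = Lᴴ) :
    ∀ X Y : Matrix (Fin N) (Fin N) ℂ,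
      (Xᴴ * NormedSpace.exp ((-(β / 2 : ℝ) : ℂ) • H) * (Lᴴ * Y * L) *
          NormedSpace.exp ((-(β / 2 : ℝ) : ℂ) • H)).trace =
        ((Lᴴ * X * L)ᴴ * NormedSpace.exp ((-(β / 2 : ℝ) : ℂ) • H) * Y *
          NormedSpace.exp ((-(β / 2 : ℝ) : ℂ) • H)).trace :=
  stmt15_general N H β L hL
end
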